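/- Let γ : ℝ → ℝ² be a C^∞ regular curve with a generic inflection point at t = 0, with [γ'(t), γ''(t)] ≠ 0 for t ≠ 0 near 0, and suppose that t is the 3/4-arclength parameter, i.e. s_A(t) = sgn(t)·|t|^{4/3} for all t near 0. Let F be the C^∞ extension of the normalized affine curvature function (s_A)²·κ_A at t = 0. Then 32·F'(0)² + 9·F''(0) = 0. -/

import Mathlib

noncomputable section
open Real Set Filter Topology

/-- The determinant `[a, b] = a₁b₂ − a₂b₁` of two vectors in the plane. -/
def det2 (a b : ℝ × ℝ) : ℝ := a.1 * b.2 - a.2 * b.1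

/-- The Euclidean norm on `ℝ × ℝ`. -/
def enorm2 (a : ℝ × ℝ) : ℝ := Real.sqrt (a.1 ^ 2 + a.2 ^ 2)

/-- The Euclidean arclength parameter of `γ` based at `0`. -/
def sG (γ : ℝ → ℝ × ℝ) (t : ℝ) : ℝ := ∫ u in (0:ℝ)..t, enorm2 (deriv γ u)

/-- The affine arclength parameter of `γ` based at `0`. -/
def sA (γ : ℝ → ℝ × ℝ) (t : ℝ) : ℝ :=
  ∫ u in (0:ℝ)..t, |det2 (deriv γ u) (iteratedDeriv 2 γ u)| ^ ((1:ℝ)/3)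

/-- The Euclidean curvature `κ_g = [γ', γ'']/‖γ'‖³`. -/
def kappaG (γ : ℝ → ℝ × ℝ) (t : ℝ) : ℝ :=
  det2 (deriv γ t) (iteratedDeriv 2 γ t) / enorm2 (deriv γ t) ^ 3

/-- The affine curvature `κ_A`. -/
def kappaA (γ : ℝ → ℝ × ℝ) (t : ℝ) : ℝ :=
  (3 * det2 (deriv γ t) (iteratedDeriv 2 γ t) * det2 (deriv γ t) (iteratedDeriv 4 γ t)
    + 12 * det2 (deriv γ t) (iteratedDeriv 2 γ t)
        * det2 (iteratedDeriv 2 γ t) (iteratedDeriv 3 γ t)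
    - 5 * det2 (deriv γ t) (iteratedDeriv 3 γ t) ^ 2)
  / (9 * |det2 (deriv γ t) (iteratedDeriv 2 γ t)| ^ ((8:ℝ)/3))

/-- `γ` has a 3/2-cusp at `t = 0`. -/
def HasCusp (γ : ℝ → ℝ × ℝ) : Prop :=
  deriv γ 0 = 0 ∧ det2 (iteratedDeriv 2 γ 0) (iteratedDeriv 3 γ 0) ≠ 0

/-- The Euclidean cuspidal curvature at a 3/2-cusp `t = 0`. -/
def muG (γ : ℝ → ℝ × ℝ) : ℝ :=
  det2 (iteratedDeriv 2 γ 0) (iteratedDeriv 3 γ 0) / enorm2 (iteratedDeriv 2 γ 0) ^ ((5:ℝ)/2)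

/-- The affine cuspidal curvature at a 3/2-cusp `t = 0`. -/
def muA (γ : ℝ → ℝ × ℝ) : ℝ :=
  (24 * det2 (iteratedDeriv 2 γ 0) (iteratedDeriv 3 γ 0)
      * det2 (iteratedDeriv 2 γ 0) (iteratedDeriv 5 γ 0)
   + 60 * det2 (iteratedDeriv 2 γ 0) (iteratedDeriv 3 γ 0)
      * det2 (iteratedDeriv 3 γ 0) (iteratedDeriv 4 γ 0)
   - 35 * det2 (iteratedDeriv 2 γ 0) (iteratedDeriv 4 γ 0) ^ 2)
  / |det2 (iteratedDeriv 2 γ 0) (iteratedDeriv 3 γ 0)| ^ ((12:ℝ)/5)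

/-- `γ` (regular at `0`) has a generic inflection point at `t = 0`. -/
def HasGenericInflection (γ : ℝ → ℝ × ℝ) : Prop :=
  deriv γ 0 ≠ 0 ∧ det2 (deriv γ 0) (iteratedDeriv 2 γ 0) = 0 ∧
    det2 (deriv γ 0) (iteratedDeriv 3 γ 0) ≠ 0

/-- The affine inflectional curvature at a generic inflection point `t = 0`. -/
def muI (γ : ℝ → ℝ × ℝ) : ℝ :=
  Real.sign (det2 (deriv γ 0) (iteratedDeriv 3 γ 0)) *
    (det2 (deriv γ 0) (iteratedDeriv 4 γ 0)
      - 6 * det2 (iteratedDeriv 2 γ 0) (iteratedDeriv 3 γ 0))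
  / |det2 (deriv γ 0) (iteratedDeriv 3 γ 0)| ^ ((5:ℝ)/4)

/-- The affine map `x ↦ Ax + v` on the plane, with `A = (a b; c d)`. -/
def applyAff (a b c d : ℝ) (v : ℝ × ℝ) (p : ℝ × ℝ) : ℝ × ℝ :=
  (a * p.1 + b * p.2 + v.1, c * p.1 + d * p.2 + v.2)

/-!
Differentiating `s_A(t) = sgn(t)·|t|^{4/3}` gives `|δ(t)|^{1/3} = (4/3)·|t|^{1/3}` for
`δ = [γ', γ'']`, i.e. `|δ(t)| = (64/27)·|t|`. Since `δ(0) = 0` and `δ'(0) = c := [γ', γ'''](0) ≠ 0`,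
the slope `δ(t)/t ∈ {±c}` must equal `c`, so `δ(t) = c·t` near `0` and `|c| = 64/27`.
Differentiating this identity twice gives `[γ', γ'''] ≡ c` and `[γ', γ⁗] = -[γ'', γ''']` near `0`,
whence `F(t) = (9c·t·B(t) - 5c²) / (9|c|^{8/3})` with `B = [γ'', γ''']`. Writing
`γ''(0) = l·γ'(0)` gives `B(0) = l·c` and `B'(0) = -l²·c`, so with `r = c²/|c|^{8/3} = 9/16` we get
`F'(0) = l·r`, `F''(0) = -2l²·r` and `32F'(0)² + 9F''(0) = 2l²r(16r - 9) = 0`.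
-/

lemma det2_self (a : ℝ × ℝ) : det2 a a = 0 := by
  simp [det2, mul_comm]

lemma det2_smul_left (l : ℝ) (a b : ℝ × ℝ) : det2 (l • a) b = l * det2 a b := by
  simp only [det2, Prod.smul_fst, Prod.smul_snd, smul_eq_mul]
  ring

lemma exists_eq_smul_of_det2_eq_zero {a b : ℝ × ℝ} (ha : a ≠ 0) (h : det2 a b = 0) :
    ∃ l : ℝ, b = l • a := by
  unfold det2 at h
  by_cases h₁ : a.1 = 0
  · have h₂ : a.2 ≠ 0 := fun h₂ => ha (Prod.ext h₁ h₂)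
    refine ⟨b.2 / a.2, Prod.ext ?_ ?_⟩ <;> simp only [Prod.smul_fst, Prod.smul_snd, smul_eq_mul]
    · rw [h₁] at h ⊢
      field_simp
      linarith
    · field_simp
  · refine ⟨b.1 / a.1, Prod.ext ?_ ?_⟩ <;> simp only [Prod.smul_fst, Prod.smul_snd, smul_eq_mul]
    · field_simp
    · field_simp
      linarith

theorem HasDerivAt.det2 {f g : ℝ → ℝ × ℝ} {f' g' : ℝ × ℝ} {t : ℝ}
    (hf : HasDerivAt f f' t) (hg : HasDerivAt g g' t) :
    HasDerivAt (fun u => det2 (f u) (g u)) (det2 f' (g t) + det2 (f t) g') t := by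
  have fst {h : ℝ → ℝ × ℝ} {h'} (hh : HasDerivAt h h' t) : HasDerivAt (fun u => (h u).1) h'.1 t :=
    by simpa using hh.hasFDerivAt.fst.hasDerivAt
  have snd {h : ℝ → ℝ × ℝ} {h'} (hh : HasDerivAt h h' t) : HasDerivAt (fun u => (h u).2) h'.2 t :=
    by simpa using hh.hasFDerivAt.snd.hasDerivAt
  exact (((fst hf).mul (snd hg)).sub ((snd hf).mul (fst hg))).congr_deriv
    (by simp only [_root_.det2]; ring)

theorem ContDiff.hasDerivAt_iteratedDeriv {𝕜 E : Type*} [NontriviallyNormedField 𝕜]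
    [NormedAddCommGroup E] [NormedSpace 𝕜 E] {f : 𝕜 → E} (hf : ContDiff 𝕜 (⊤ : ℕ∞) f)
    (n : ℕ) (t : 𝕜) : HasDerivAt (iteratedDeriv n f) (iteratedDeriv (n + 1) f t) t := by
  rw [iteratedDeriv_succ]
  exact (hf.differentiable_iteratedDeriv n (by exact_mod_cast ENat.natCast_lt_top n)
    ).differentiableAt.hasDerivAt

lemma hasDerivAt_sign_mul_abs_rpow {p t : ℝ} (ht : t ≠ 0) :
    HasDerivAt (fun u => Real.sign u * |u| ^ p) (p * |t| ^ (p - 1)) t := by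
  rcases ht.lt_or_gt with ht | ht
  · have h := ((hasDerivAt_rpow_const (p := p) (Or.inl (neg_ne_zero.2 ht.ne))).comp t
      (hasDerivAt_neg t)).neg
    refine (h.congr_of_eventuallyEq ?_).congr_deriv (by rw [abs_of_neg ht]; ring)
    filter_upwards [Iio_mem_nhds ht] with u (hu : u < 0)
    simp [Real.sign_of_neg hu, abs_of_neg hu]
  · refine ((hasDerivAt_rpow_const (p := p) (Or.inl ht.ne')).congr_of_eventuallyEq ?_).congr_deriv
      (by rw [abs_of_pos ht])
    filter_upwards [Ioi_mem_nhds ht] with u (hu : 0 < u)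
    simp [Real.sign_of_pos hu, abs_of_pos hu]

lemma sq_sign_mul_abs_rpow {t : ℝ} (ht : t ≠ 0) (p : ℝ) :
    (Real.sign t * |t| ^ p) ^ 2 = |t| ^ (2 * p) := by
  have hsign : Real.sign t ^ 2 = 1 := by
    rcases Real.sign_apply_eq_of_ne_zero t ht with h | h <;> simp [h]
  rw [mul_pow, hsign, one_mul, ← Real.rpow_natCast, ← Real.rpow_mul (abs_nonneg t), mul_comm]
  norm_num

lemma rpow_one_third_pow_three {x : ℝ} (hx : 0 ≤ x) : (x ^ ((1:ℝ)/3)) ^ 3 = x := by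
  simpa using rpow_inv_natCast_pow hx (n := 3) (by norm_num)

lemma tendsto_div_of_hasDerivAt {f : ℝ → ℝ} {c : ℝ} (hf : HasDerivAt f c 0) (hf0 : f 0 = 0) :
    Tendsto (fun t => f t / t) (𝓝[≠] 0) (𝓝 c) :=
  (hasDerivAt_iff_tendsto_slope.1 hf).congr fun t => by simp [slope_def_field, hf0]

lemma abs_eq_of_hasDerivAt_of_abs_eq {f : ℝ → ℝ} {c k : ℝ} (hf : HasDerivAt f c 0)
    (hf0 : f 0 = 0) (habs : ∀ᶠ t in 𝓝[≠] 0, |f t| = k * |t|) : |c| = k := by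
  refine tendsto_nhds_unique ((tendsto_div_of_hasDerivAt hf hf0).abs.congr' ?_)
    tendsto_const_nhds
  filter_upwards [habs, self_mem_nhdsWithin] with t ht (ht0 : t ≠ 0)
  rw [abs_div, ht, mul_div_assoc, div_self (abs_ne_zero.2 ht0), mul_one]

lemma eventuallyEq_mul_of_hasDerivAt_of_abs_eq {f : ℝ → ℝ} {c k : ℝ} (hf : HasDerivAt f c 0)
    (hf0 : f 0 = 0) (hc : c ≠ 0) (habs : ∀ᶠ t in 𝓝[≠] 0, |f t| = k * |t|) :
    f =ᶠ[𝓝 0] (c * ·) := by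
  have hk := abs_eq_of_hasDerivAt_of_abs_eq hf hf0 habs
  refine eventuallyEq_nhds_of_eventuallyEq_nhdsNE ?_ (by simp [hf0])
  filter_upwards [habs, self_mem_nhdsWithin,
    (tendsto_div_of_hasDerivAt hf hf0).eventually (Metric.ball_mem_nhds c (abs_pos.2 hc))]
    with t ht (ht0 : t ≠ 0) hnear
  have hq : f t / t = c ∨ f t / t = -c := by
    apply abs_eq_abs.1
    rw [abs_div, ht, ← hk, mul_div_assoc, div_self (abs_ne_zero.2 ht0), mul_one]
  rcases hq with hq | hq
  · rw [div_eq_iff ht0] at hq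
    rw [hq, mul_comm]
  · rw [Real.dist_eq, hq, show -c - c = -(2 * c) by ring, abs_neg, abs_mul] at hnear
    norm_num at hnear
    linarith [abs_pos.2 hc]

lemma sq_div_abs_rpow_eq {c : ℝ} (hc : |c| = 64/27) : c ^ 2 / |c| ^ ((8:ℝ)/3) = 9/16 := by
  have hP : |c| ^ ((8:ℝ)/3) = (4/3) ^ 8 := by
    rw [hc, show (64:ℝ)/27 = (4/3) ^ (3:ℝ) by norm_num, ← Real.rpow_mul (by norm_num)]
    norm_num
  rw [← sq_abs, hP, hc]
  norm_num

section ConstAddMulIdMul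

variable {B : ℝ → ℝ} (a b : ℝ)

lemma hasDerivAt_const_add_mul_id_mul {t d : ℝ} (hB : HasDerivAt B d t) :
    HasDerivAt (fun t => a + b * (t * B t)) (b * (B t + t * d)) t :=
  ((((hasDerivAt_id' t).fun_mul hB).const_mul b).const_add a).congr_deriv (by ring)

lemma deriv_const_add_mul_id_mul_zero {d : ℝ} (hB : HasDerivAt B d 0) :
    deriv (fun t => a + b * (t * B t)) 0 = b * B 0 := by
  simp [(hasDerivAt_const_add_mul_id_mul a b hB).deriv]

lemma iteratedDeriv_two_const_add_mul_id_mul_zero {B' : ℝ → ℝ}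
    (hB : ∀ t, HasDerivAt B (B' t) t) (hB' : DifferentiableAt ℝ B' 0) :
    iteratedDeriv 2 (fun t => a + b * (t * B t)) 0 = 2 * b * B' 0 := by
  rw [iteratedDeriv_succ, iteratedDeriv_one,
    funext fun t => (hasDerivAt_const_add_mul_id_mul a b (hB t)).deriv,
    (((hB 0).fun_add ((hasDerivAt_id' 0).fun_mul hB'.hasDerivAt)).const_mul b).deriv]
  ring

end ConstAddMulIdMul

/-- `bracket γ m n t = [γ⁽ᵐ⁾(t), γ⁽ⁿ⁾(t)]`; the paper's `[γ', γ'']` is `bracket γ 1 2`. -/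
def bracket (γ : ℝ → ℝ × ℝ) (m n : ℕ) (t : ℝ) : ℝ :=
  det2 (iteratedDeriv m γ t) (iteratedDeriv n γ t)

section Bracket

variable {γ : ℝ → ℝ × ℝ}

lemma bracket_self (n : ℕ) (t : ℝ) : bracket γ n n t = 0 :=
  det2_self _

lemma hasDerivAt_bracket (hγ : ContDiff ℝ (⊤ : ℕ∞) γ) (m n : ℕ) (t : ℝ) :
    HasDerivAt (bracket γ m n) (bracket γ (m + 1) n t + bracket γ m (n + 1) t) t :=
  (hγ.hasDerivAt_iteratedDeriv m t).det2 (hγ.hasDerivAt_iteratedDeriv n t)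

lemma sA_eq_integral_bracket (t : ℝ) :
    sA γ t = ∫ u in (0:ℝ)..t, |bracket γ 1 2 u| ^ ((1:ℝ)/3) := by
  simp only [sA, bracket, iteratedDeriv_one]

lemma kappaA_eq_bracket (t : ℝ) :
    kappaA γ t = (3 * bracket γ 1 2 t * bracket γ 1 4 t + 12 * bracket γ 1 2 t * bracket γ 2 3 t
      - 5 * bracket γ 1 3 t ^ 2) / (9 * |bracket γ 1 2 t| ^ ((8:ℝ)/3)) := by
  simp only [kappaA, bracket, iteratedDeriv_one]

lemma hasGenericInflection_iff :
    HasGenericInflection γ ↔ deriv γ 0 ≠ 0 ∧ bracket γ 1 2 0 = 0 ∧ bracket γ 1 3 0 ≠ 0 := by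
  simp only [HasGenericInflection, bracket, iteratedDeriv_one]

lemma hasDerivAt_sA (hγ : ContDiff ℝ (⊤ : ℕ∞) γ) (t : ℝ) :
    HasDerivAt (sA γ) (|bracket γ 1 2 t| ^ ((1:ℝ)/3)) t := by
  have hδ : Continuous (bracket γ 1 2) :=
    continuous_iff_continuousAt.2 fun u => (hasDerivAt_bracket hγ 1 2 u).continuousAt
  have hcont : Continuous fun u => |bracket γ 1 2 u| ^ ((1:ℝ)/3) :=
    hδ.abs.rpow_const fun _ => Or.inr (by norm_num)
  rw [show sA γ = fun t => ∫ u in (0:ℝ)..t, |bracket γ 1 2 u| ^ ((1:ℝ)/3) from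
    funext sA_eq_integral_bracket]
  exact intervalIntegral.integral_hasDerivAt_right (hcont.intervalIntegrable 0 t)
    hcont.stronglyMeasurable.stronglyMeasurableAtFilter hcont.continuousAt

lemma abs_bracket_one_two_eventually (hγ : ContDiff ℝ (⊤ : ℕ∞) γ)
    (hpar : ∀ᶠ t in 𝓝 (0:ℝ), sA γ t = Real.sign t * |t| ^ ((4:ℝ)/3)) :
    ∀ᶠ t in 𝓝[≠] 0, |bracket γ 1 2 t| = 64/27 * |t| := by
  filter_upwards [eventually_nhdsWithin_of_eventually_nhds hpar.eventually_nhds,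
    self_mem_nhdsWithin] with t ht (ht0 : t ≠ 0)
  have h := (hasDerivAt_sA hγ t).unique
    ((hasDerivAt_sign_mul_abs_rpow ht0).congr_of_eventuallyEq ht)
  rw [← rpow_one_third_pow_three (abs_nonneg (bracket γ 1 2 t)), h, mul_pow,
    show (4:ℝ)/3 - 1 = 1/3 by norm_num, rpow_one_third_pow_three (abs_nonneg t)]
  norm_num

lemma hasDerivAt_bracket_one_two_zero (hγ : ContDiff ℝ (⊤ : ℕ∞) γ) :
    HasDerivAt (bracket γ 1 2) (bracket γ 1 3 0) 0 := by
  simpa [bracket_self] using hasDerivAt_bracket hγ 1 2 0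

lemma abs_bracket_one_three_zero (hγ : ContDiff ℝ (⊤ : ℕ∞) γ) (hinf : HasGenericInflection γ)
    (hpar : ∀ᶠ t in 𝓝 (0:ℝ), sA γ t = Real.sign t * |t| ^ ((4:ℝ)/3)) :
    |bracket γ 1 3 0| = 64/27 :=
  abs_eq_of_hasDerivAt_of_abs_eq (hasDerivAt_bracket_one_two_zero hγ)
    (hasGenericInflection_iff.1 hinf).2.1 (abs_bracket_one_two_eventually hγ hpar)

lemma bracket_one_two_eventuallyEq (hγ : ContDiff ℝ (⊤ : ℕ∞) γ) (hinf : HasGenericInflection γ)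
    (hpar : ∀ᶠ t in 𝓝 (0:ℝ), sA γ t = Real.sign t * |t| ^ ((4:ℝ)/3)) :
    bracket γ 1 2 =ᶠ[𝓝 0] (bracket γ 1 3 0 * ·) :=
  eventuallyEq_mul_of_hasDerivAt_of_abs_eq (hasDerivAt_bracket_one_two_zero hγ)
    (hasGenericInflection_iff.1 hinf).2.1 (hasGenericInflection_iff.1 hinf).2.2
    (abs_bracket_one_two_eventually hγ hpar)

lemma eventually_bracket_of_bracket_one_two_eq_mul (hγ : ContDiff ℝ (⊤ : ℕ∞) γ) {c : ℝ}
    (h : bracket γ 1 2 =ᶠ[𝓝 0] (c * ·)) :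
    ∀ᶠ t in 𝓝 0, bracket γ 1 3 t = c ∧ bracket γ 1 4 t = -bracket γ 2 3 t := by
  have h13 : bracket γ 1 3 =ᶠ[𝓝 0] fun _ => c := by
    filter_upwards [h.eventuallyEq_nhds] with t ht
    simpa [bracket_self] using (hasDerivAt_bracket hγ 1 2 t).unique
      (((hasDerivAt_id t).const_mul c).congr_of_eventuallyEq ht)
  filter_upwards [h13, h13.eventuallyEq_nhds] with t ht ht'
  refine ⟨ht, ?_⟩
  have := (hasDerivAt_bracket hγ 1 3 t).unique ((hasDerivAt_const t c).congr_of_eventuallyEq ht')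
  linarith

lemma exists_bracket_two_eq_smul (hinf : HasGenericInflection γ) :
    ∃ l : ℝ, bracket γ 2 3 0 = l * bracket γ 1 3 0 ∧ bracket γ 2 4 0 = l * bracket γ 1 4 0 := by
  obtain ⟨h1, h12, -⟩ := hinf
  obtain ⟨l, hl⟩ := exists_eq_smul_of_det2_eq_zero h1 h12
  exact ⟨l, by simp [bracket, hl, det2_smul_left]⟩

lemma sA_sq_mul_kappaA_eq {t c : ℝ} (ht : t ≠ 0) (hc : c ≠ 0)
    (hs : sA γ t = Real.sign t * |t| ^ ((4:ℝ)/3)) (h12 : bracket γ 1 2 t = c * t)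
    (h13 : bracket γ 1 3 t = c) (h14 : bracket γ 1 4 t = -bracket γ 2 3 t) :
    sA γ t ^ 2 * kappaA γ t
      = -(5 * c ^ 2) / (9 * |c| ^ ((8:ℝ)/3)) + c / |c| ^ ((8:ℝ)/3) * (t * bracket γ 2 3 t) := by
  have hP : |c * t| ^ ((8:ℝ)/3) = |c| ^ ((8:ℝ)/3) * |t| ^ (2 * ((4:ℝ)/3)) := by
    rw [abs_mul, Real.mul_rpow (abs_nonneg c) (abs_nonneg t)]
    norm_num
  have hc' : |c| ^ ((8:ℝ)/3) ≠ 0 := (Real.rpow_pos_of_pos (abs_pos.2 hc) _).ne'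
  have ht' : |t| ^ (2 * ((4:ℝ)/3)) ≠ 0 := (Real.rpow_pos_of_pos (abs_pos.2 ht) _).ne'
  rw [kappaA_eq_bracket, hs, sq_sign_mul_abs_rpow ht, h12, h13, h14, hP]
  field_simp
  ring

end Bracket

theorem stmt_17_general (γ : ℝ → ℝ × ℝ) (hγ : ContDiff ℝ (⊤:ℕ∞) γ)
    (hinf : HasGenericInflection γ)
    (hpar : ∀ᶠ t in 𝓝 (0:ℝ), sA γ t = Real.sign t * |t| ^ ((4:ℝ)/3))
    (F : ℝ → ℝ) (ε : ℝ) (hε : 0 < ε)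
    (hF : ContDiffOn ℝ (⊤:ℕ∞) F (Set.Ioo (-ε) ε))
    (hFeq : ∀ t ∈ Set.Ioo (-ε) ε, t ≠ 0 → F t = sA γ t ^ 2 * kappaA γ t) :
    32 * deriv F 0 ^ 2 + 9 * iteratedDeriv 2 F 0 = 0 := by
  set c := bracket γ 1 3 0
  set P := |c| ^ ((8:ℝ)/3)
  have hc : c ≠ 0 := (hasGenericInflection_iff.1 hinf).2.2
  have hB : ∀ t, HasDerivAt (bracket γ 2 3) (bracket γ 3 3 t + bracket γ 2 4 t) t :=
    hasDerivAt_bracket hγ 2 3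
  have hδ := bracket_one_two_eventuallyEq hγ hinf hpar
  have hFG : F =ᶠ[𝓝 0] fun t => -(5 * c ^ 2) / (9 * P) + c / P * (t * bracket γ 2 3 t) := by
    have hIoo : Ioo (-ε) ε ∈ 𝓝 0 := Ioo_mem_nhds (by linarith) hε
    refine ((hF.continuousOn.continuousAt hIoo).eventuallyEq_nhds_iff_eventuallyEq_nhdsNE
      (hasDerivAt_const_add_mul_id_mul _ _ (hB 0)).continuousAt).1 ?_
    filter_upwards [eventually_nhdsWithin_of_eventually_nhds
      (hpar.and (hδ.and ((eventually_bracket_of_bracket_one_two_eq_mul hγ hδ).and hIoo))),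
      self_mem_nhdsWithin] with t ⟨hs, h12, ⟨h13, h14⟩, htε⟩ (ht : t ≠ 0)
    rw [hFeq t htε ht, sA_sq_mul_kappaA_eq ht hc hs h12 h13 h14]
  obtain ⟨l, hl23, hl24⟩ := exists_bracket_two_eq_smul hinf
  have h14 : bracket γ 1 4 0 = -bracket γ 2 3 0 :=
    (eventually_bracket_of_bracket_one_two_eq_mul hγ hδ).self_of_nhds.2
  have hr : c ^ 2 / P = 9/16 := sq_div_abs_rpow_eq (abs_bracket_one_three_zero hγ hinf hpar)
  rw [hFG.deriv_eq, hFG.iteratedDeriv_eq, deriv_const_add_mul_id_mul_zero _ _ (hB 0),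
    iteratedDeriv_two_const_add_mul_id_mul_zero _ _ hB (hasDerivAt_bracket hγ 3 3 0 |>.add
      (hasDerivAt_bracket hγ 2 4 0)).differentiableAt, bracket_self, hl24, h14, hl23]
  linear_combination (32 * l ^ 2 * (c ^ 2 / P)) * hr

/-- At a generic inflection point parametrized by the 3/4-arclength parameter
(`s_A(t) = sgn(t)·|t|^{4/3}` near `0`), the `C^∞` extension `F` of `(s_A)²·κ_A`
satisfies `32·F'(0)² + 9·F''(0) = 0`. -/
theorem stmt_17 (γ : ℝ → ℝ × ℝ) (hγ : ContDiff ℝ (⊤:ℕ∞) γ)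
    (hinf : HasGenericInflection γ)
    (hreg : ∀ᶠ t in 𝓝[≠] (0:ℝ), det2 (deriv γ t) (iteratedDeriv 2 γ t) ≠ 0)
    (hpar : ∀ᶠ t in 𝓝 (0:ℝ), sA γ t = Real.sign t * |t| ^ ((4:ℝ)/3))
    (F : ℝ → ℝ) (ε : ℝ) (hε : 0 < ε)
    (hF : ContDiffOn ℝ (⊤:ℕ∞) F (Set.Ioo (-ε) ε))
    (hFeq : ∀ t ∈ Set.Ioo (-ε) ε, t ≠ 0 → F t = sA γ t ^ 2 * kappaA γ t) :
    32 * deriv F 0 ^ 2 + 9 * iteratedDeriv 2 F 0 = 0 :=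
  stmt_17_general γ hγ hinf hpar F ε hε hF hFeq
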